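/- Let R be a ring, S_l(R) the largest left Ore set of R consisting of regular elements, Q_l(R) := S_l(R)⁻¹R, 'S_l(R) the largest left denominator set of R contained in 'C_R, 'Q_l(R) := 'S_l(R)⁻¹R and 'a := ass_R('S_l(R)). Then: (1) S_l(R) ⊆ 'S_l(R) ⊆ 'C_R, and hence ass_R(S_l(R)) ⊆ ass_R('S_l(R)) ⊆ ass_R('C_R); (2) the map φ : Q_l(R) → 'Q_l(R), s⁻¹r ↦ s⁻¹r, is a well-defined R-ring homomorphism with kernel S_l(R)⁻¹'a; (3) φ is an isomorphism if and only if 'a = 0, if and only if S_l(R) = 'S_l(R); (4) the rings Q_l(R) and 'Q_l(R) are R-isomorphic if and only if one of the equivalent conditions of (3) holds. -/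

import Mathlib

universe u

namespace Bavula

/-- The set of left regular elements of `R`. -/
def lReg (R : Type u) [Ring R] : Set R := {c : R | ∀ x : R, x * c = 0 → x = 0}

/-- The set of right regular elements of `R`. -/
def rReg (R : Type u) [Ring R] : Set R := {c : R | ∀ x : R, c * x = 0 → x = 0}

/-- The set of regular elements of `R`. -/
def reg (R : Type u) [Ring R] : Set R := lReg R ∩ rReg R

/-- `S` is a multiplicative set of `R`. -/
def IsMulSet {R : Type u} [Ring R] (S : Set R) : Prop :=
  (1 : R) ∈ S ∧ (∀ a ∈ S, ∀ b ∈ S, a * b ∈ S) ∧ (0 : R) ∉ S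

/-- `S` is a left Ore set of `R`. -/
def IsLeftOre {R : Type u} [Ring R] (S : Set R) : Prop :=
  IsMulSet S ∧ ∀ s ∈ S, ∀ r : R, ∃ s' ∈ S, ∃ r' : R, s' * r = r' * s

/-- `S` is a left denominator set of `R`. -/
def IsLeftDenom {R : Type u} [Ring R] (S : Set R) : Prop :=
  IsLeftOre S ∧ ∀ r : R, ∀ s ∈ S, r * s = 0 → ∃ t ∈ S, t * r = 0

/-- `S` is a right Ore set of `R`. -/
def IsRightOre {R : Type u} [Ring R] (S : Set R) : Prop :=
  IsMulSet S ∧ ∀ s ∈ S, ∀ r : R, ∃ s' ∈ S, ∃ r' : R, r * s' = s * r'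

/-- `S` is a right denominator set of `R`. -/
def IsRightDenom {R : Type u} [Ring R] (S : Set R) : Prop :=
  IsRightOre S ∧ ∀ r : R, ∀ s ∈ S, s * r = 0 → ∃ t ∈ S, r * t = 0

/-- `ass_R(S) = {r ∈ R | s r = 0 for some s ∈ S}`. -/
def ass {R : Type u} [Ring R] (S : Set R) : Set R := {r : R | ∃ s ∈ S, s * r = 0}

/-- `{r ∈ R | r s = 0 for some s ∈ S}` (the right-sided analogue of `ass`). -/
def rass {R : Type u} [Ring R] (S : Set R) : Set R := {r : R | ∃ s ∈ S, r * s = 0}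

/-- `S` is a (left) dense subset of `T`. -/
def DenseIn {R : Type u} [Ring R] (S T : Set R) : Prop := ∀ t ∈ T, ∃ r : R, r * t ∈ S

/-- `f : R →+* Q` realizes `Q` as the left localization `S⁻¹R` of `R` at `S`:
elements of `S` become units, every element of `Q` is a left fraction `(f s)⁻¹ * (f r)`,
and the kernel of `f` is `ass S`. -/
def IsLeftLoc {R : Type u} [Ring R] (S : Set R) {Q : Type u} [Ring Q] (f : R →+* Q) : Prop :=
  (∀ s ∈ S, IsUnit (f s)) ∧
  (∀ q : Q, ∃ s ∈ S, ∃ r : R, f s * q = f r) ∧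
  (∀ r : R, f r = 0 ↔ r ∈ ass S)

/-- `π : R →+* Q` realizes `Q` as the quotient of `R` by the set `a`
(in particular, `a` is then a two-sided ideal of `R`). -/
def IsQuotBy {R : Type u} [Ring R] (a : Set R) {Q : Type u} [Ring Q] (π : R →+* Q) : Prop :=
  Function.Surjective π ∧ ∀ r : R, π r = 0 ↔ r ∈ a

/-- A semiprime ring (no nonzero nilpotent ideals), elementwise: `x R x = 0 → x = 0`. -/
def SemiprimeRing (A : Type u) [Ring A] : Prop := ∀ x : A, (∀ r : A, x * r * x = 0) → x = 0

/-- `a` is a two-sided ideal of `R`, given as a set. -/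
def IsIdealSet {R : Type u} [Ring R] (a : Set R) : Prop :=
  (0 : R) ∈ a ∧ (∀ x ∈ a, ∀ y ∈ a, x + y ∈ a) ∧ ∀ r : R, ∀ x ∈ a, r * x ∈ a ∧ x * r ∈ a

/-- `a` is a semiprime (two-sided) ideal of `R`, i.e. `R/a` is a semiprime ring. -/
def IsSemiprimeIdealSet {R : Type u} [Ring R] (a : Set R) : Prop :=
  IsIdealSet a ∧ ∀ x : R, (∀ r : R, x * r * x ∈ a) → x ∈ a

/-- `a` is a prime (two-sided) ideal of `R`, i.e. `R/a` is a prime ring. -/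
def IsPrimeIdealSet {R : Type u} [Ring R] (a : Set R) : Prop :=
  IsIdealSet a ∧ a ≠ Set.univ ∧ ∀ x y : R, (∀ r : R, x * r * y ∈ a) → x ∈ a ∨ y ∈ a

/-- The prime radical of `A`: the intersection of all prime ideals of `A`. -/
def primeRadical (A : Type u) [Ring A] : Set A :=
  {x : A | ∀ p : Set A, IsPrimeIdealSet p → x ∈ p}

/-- The set of prime ideals of `R` minimal over `a`. -/
def minPrimesOver {R : Type u} [Ring R] (a : Set R) : Set (Set R) :=
  {p : Set R | IsPrimeIdealSet p ∧ a ⊆ p ∧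
    ∀ q : Set R, IsPrimeIdealSet q → a ⊆ q → q ⊆ p → q = p}

/-- A simple ring: nontrivial, with no two-sided ideals other than `0` and `A`. -/
def SimpleRing (A : Type u) [Ring A] : Prop :=
  (0 : A) ≠ 1 ∧ ∀ a : Set A, IsIdealSet a → a = {0} ∨ a = Set.univ

/-- A simple (left) Artinian ring. -/
def SimpleArtinianRing (A : Type u) [Ring A] : Prop := SimpleRing A ∧ IsArtinianRing A

/-- `I` is an essential left ideal of `R`. -/
def EssIdeal {R : Type u} [Ring R] (I : Submodule R R) : Prop :=
  ∀ J : Submodule R R, J ≠ ⊥ → I ⊓ J ≠ ⊥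

/-- `N` is an essential submodule of the left ideal `M`. -/
def EssIn {R : Type u} [Ring R] (N M : Submodule R R) : Prop :=
  N ≤ M ∧ ∀ W : Submodule R R, W ≤ M → W ≠ ⊥ → N ⊓ W ≠ ⊥

/-- `U` is a uniform left ideal of `R`. -/
def UniformIdeal {R : Type u} [Ring R] (U : Submodule R R) : Prop :=
  U ≠ ⊥ ∧ ∀ V W : Submodule R R, V ≤ U → W ≤ U → V ≠ ⊥ → W ≠ ⊥ → V ⊓ W ≠ ⊥

/-- `udim(_A A) < ∞`: there is a finite direct sum of uniform left ideals of `A`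
which is an essential left ideal of `A`. -/
def FinUdim (A : Type u) [Ring A] : Prop :=
  ∃ (n : ℕ) (U : Fin (n + 1) → Submodule A A),
    (∀ i, UniformIdeal (U i)) ∧
    (∀ i, U i ⊓ (⨆ j, ⨆ (_ : j ≠ i), U j) = ⊥) ∧
    EssIdeal (⨆ i, U i)

/-- `'C_V = {v ∈ V | right multiplication by v is injective on V}` for a left ideal `V`. -/
def lRegIn {R : Type u} [Ring R] (V : Submodule R R) : Set R :=
  {v : R | v ∈ V ∧ ∀ x ∈ V, x * v = 0 → x = 0}

/-- The family `P` of subsets of `R` satisfies the ascending chain condition. -/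
def AccOnSets {R : Type u} [Ring R] (P : Set (Set R)) : Prop :=
  ∀ f : ℕ → Set R, (∀ n, f n ∈ P) → (∀ n, f n ⊆ f (n + 1)) →
    ∃ N : ℕ, ∀ n : ℕ, N ≤ n → f n = f N

/-- The left annihilator of `X` in `R`. -/
def lAnn {R : Type u} [Ring R] (X : Set R) : Set R := {r : R | ∀ x ∈ X, r * x = 0}

/-- The right annihilator of `X` in `R`. -/
def rAnn {R : Type u} [Ring R] (X : Set R) : Set R := {r : R | ∀ x ∈ X, x * r = 0}

/-- A left Goldie ring: a.c.c. on left annihilators and finite left uniform dimension. -/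
def LeftGoldie (A : Type u) [Ring A] : Prop :=
  AccOnSets {B : Set A | ∃ X : Set A, B = lAnn X} ∧ FinUdim A

/-- The set of maximal left denominator sets of `A`. -/
def maxLeftDenom (A : Type u) [Ring A] : Set (Set A) :=
  {S : Set A | IsLeftDenom S ∧ ∀ T : Set A, IsLeftDenom T → S ⊆ T → S = T}

/-- `S_p = {c ∈ R | c + p ∈ C_{R/p}}`: the elements regular modulo `p`. -/
def regMod {R : Type u} [Ring R] (p : Set R) : Set R :=
  {c : R | (∀ x : R, x * c ∈ p → x ∈ p) ∧ ∀ x : R, c * x ∈ p → x ∈ p}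

/-- `I` is a right ideal of `R`, given as a set. -/
def IsRightIdealSet {R : Type u} [Ring R] (I : Set R) : Prop :=
  (0 : R) ∈ I ∧ (∀ x ∈ I, ∀ y ∈ I, x + y ∈ I) ∧ ∀ x ∈ I, ∀ r : R, x * r ∈ I

/-- The left singular ideal `ζ_l(R, a)` of `R` over `a`. -/
def leftSingularOver {R : Type u} [Ring R] (a : Set R) : Set R :=
  {r : R | ∃ I : Submodule R R, EssIdeal I ∧ a ⊆ I ∧ ∀ x ∈ I, x * r = 0}

/-!
A left Ore set of regular elements is a left denominator set inside `'C_R`, so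
`S_l(R) ⊆ 'S_l(R)` by maximality, and the universal property of the left localization
`Q_l(R)` yields `φ`. For `φ` between two left localizations, `φ q = 0` with `s q = r`
means exactly `r ∈ 'a`; `φ` is injective iff the two kernels `ass` agree on `R`, and
surjective once every denominator of `'Q_l(R)` is already one of `Q_l(R)`. Finally
`'a = 0` says that `'S_l(R)` consists of regular elements, i.e. `'S_l(R) ⊆ S_l(R)`.
-/

section Ore

variable {R : Type u} [Ring R] {S T : Set R}

theorem IsLeftOre.isLeftDenom_of_subset_lReg (hS : IsLeftOre S) (hreg : S ⊆ lReg R) :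
    IsLeftDenom S :=
  ⟨hS, fun r s hs hrs => ⟨1, hS.1.1, by rw [hreg hs r hrs, mul_zero]⟩⟩

theorem ass_mono (h : S ⊆ T) : ass S ⊆ ass T := fun _ ⟨s, hs, hsr⟩ => ⟨s, h hs, hsr⟩

theorem ass_eq_singleton_zero_iff (h1 : (1 : R) ∈ S) : ass S = {0} ↔ S ⊆ rReg R := by
  constructor
  · intro h s hs x hsx
    have hx : x ∈ ass S := ⟨s, hs, hsx⟩
    rwa [h] at hx
  · intro h
    refine Set.eq_singleton_iff_unique_mem.mpr ⟨⟨1, h1, mul_zero 1⟩, ?_⟩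
    rintro x ⟨s, hs, hsx⟩
    exact h hs x hsx

end Ore

section Lift

variable {R : Type u} [Ring R] {S : Set R} {Q : Type u} [Ring Q] {f : R →+* Q}
  {B : Type*} [Ring B] {g : R →+* B}

theorem map_eq_zero_of_mem_ass (hg : ∀ s ∈ S, IsUnit (g s)) {r : R} (hr : r ∈ ass S) :
    g r = 0 := by
  obtain ⟨s, hs, hsr⟩ := hr
  exact (hg s hs).mul_right_eq_zero.mp (by rw [← map_mul, hsr, map_zero])

def RespectsFractions (S : Set R) (f : R →+* Q) (g : R →+* B) (F : Q → B) : Prop :=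
  ∀ q, ∀ s ∈ S, ∀ r, f s * q = f r → g s * F q = g r

theorem mul_eq_of_fraction_eq (hS : IsLeftOre S) (hf : IsLeftLoc S f)
    (hg : ∀ s ∈ S, IsUnit (g s)) {q : Q} {s s' r r' : R} (hs : s ∈ S) (hs' : s' ∈ S)
    (h : f s * q = f r) (h' : f s' * q = f r') {x : B} (hx : g s' * x = g r') :
    g s * x = g r := by
  obtain ⟨t, ht, u, htu⟩ := hS.2 s hs s'
  have hr : g (t * r') = g (u * r) := by
    rw [← sub_eq_zero, ← map_sub]
    refine map_eq_zero_of_mem_ass hg ((hf.2.2 _).mp ?_)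
    rw [map_sub, sub_eq_zero, map_mul, map_mul, ← h', ← h, ← mul_assoc, ← mul_assoc,
      ← map_mul, ← map_mul, htu]
  -- `g u = g (t s') * (g s)⁻¹` is a product of units
  have hu : IsUnit (g u) := by
    refine (Units.isUnit_mul_units (g u) (hg s hs).unit).mp ?_
    rw [IsUnit.unit_spec, ← map_mul, ← htu]
    exact hg _ (hS.1.2.1 t ht s' hs')
  apply hu.mul_left_cancel
  rw [← mul_assoc, ← map_mul, ← htu, map_mul, mul_assoc, hx, ← map_mul, hr, map_mul]

theorem exists_respectsFractions (hS : IsLeftOre S) (hf : IsLeftLoc S f)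
    (hg : ∀ s ∈ S, IsUnit (g s)) : ∃ F : Q → B, RespectsFractions S f g F := by
  choose s hs r hr using hf.2.1
  refine ⟨fun q => Ring.inverse (g (s q)) * g (r q), fun q s' hs' r' h => ?_⟩
  refine mul_eq_of_fraction_eq hS hf hg hs' (hs q) h (hr q) ?_
  rw [← mul_assoc, Ring.mul_inverse_cancel _ (hg _ (hs q)), one_mul]

namespace RespectsFractions

variable {F : Q → B} (hF : RespectsFractions S f g F)
include hF

theorem apply_map (h1 : (1 : R) ∈ S) (r : R) : F (f r) = g r := by
  simpa using hF (f r) 1 h1 r (by simp)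

theorem map_mul_left (hS : IsLeftOre S) (hf : IsLeftLoc S f) (hg : ∀ s ∈ S, IsUnit (g s))
    (a : R) (q : Q) : F (f a * q) = g a * F q := by
  obtain ⟨s, hs, r, hr⟩ := hf.2.1 q
  obtain ⟨t, ht, u, htu⟩ := hS.2 s hs a
  have hfrac : f t * (f a * q) = f (u * r) := by
    rw [← mul_assoc, ← _root_.map_mul, htu, _root_.map_mul, mul_assoc, hr, _root_.map_mul]
  apply (hg t ht).mul_left_cancel
  rw [hF _ t ht _ hfrac, ← mul_assoc, ← _root_.map_mul, htu, _root_.map_mul, _root_.map_mul,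
    mul_assoc, hF q s hs r hr]

theorem map_mul (hS : IsLeftOre S) (hf : IsLeftLoc S f) (hg : ∀ s ∈ S, IsUnit (g s))
    (q₁ q₂ : Q) : F (q₁ * q₂) = F q₁ * F q₂ := by
  obtain ⟨s, hs, r, hr⟩ := hf.2.1 q₁
  apply (hg s hs).mul_left_cancel
  rw [← hF.map_mul_left hS hf hg, ← mul_assoc, hr, hF.map_mul_left hS hf hg, ← mul_assoc,
    hF q₁ s hs r hr]

theorem map_add (hS : IsLeftOre S) (hf : IsLeftLoc S f) (hg : ∀ s ∈ S, IsUnit (g s))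
    (q₁ q₂ : Q) : F (q₁ + q₂) = F q₁ + F q₂ := by
  obtain ⟨s₁, hs₁, r₁, hr₁⟩ := hf.2.1 q₁
  obtain ⟨s₂, hs₂, r₂, hr₂⟩ := hf.2.1 q₂
  obtain ⟨t, ht, u, htu⟩ := hS.2 s₁ hs₁ s₂
  have hc : t * s₂ ∈ S := hS.1.2.1 t ht s₂ hs₂
  have hfrac : f (t * s₂) * (q₁ + q₂) = f (u * r₁ + t * r₂) := by
    have e₁ : f (t * s₂) * q₁ = f (u * r₁) := by
      rw [htu, _root_.map_mul, mul_assoc, hr₁, _root_.map_mul]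
    have e₂ : f (t * s₂) * q₂ = f (t * r₂) := by
      rw [_root_.map_mul, mul_assoc, hr₂, _root_.map_mul]
    rw [mul_add, e₁, e₂, _root_.map_add]
  have e₁ : g (t * s₂) * F q₁ = g (u * r₁) := by
    rw [htu, _root_.map_mul, mul_assoc, hF q₁ s₁ hs₁ r₁ hr₁, _root_.map_mul]
  have e₂ : g (t * s₂) * F q₂ = g (t * r₂) := by
    rw [_root_.map_mul, mul_assoc, hF q₂ s₂ hs₂ r₂ hr₂, _root_.map_mul]
  apply (hg _ hc).mul_left_cancel
  rw [hF _ _ hc _ hfrac, mul_add, e₁, e₂, _root_.map_add]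

end RespectsFractions

theorem IsLeftLoc.exists_lift (hS : IsLeftOre S) (hf : IsLeftLoc S f)
    (hg : ∀ s ∈ S, IsUnit (g s)) : ∃ φ : Q →+* B, ∀ r, φ (f r) = g r := by
  obtain ⟨F, hF⟩ := exists_respectsFractions hS hf hg
  have h1 : (1 : R) ∈ S := hS.1.1
  refine ⟨{ toFun := F
            map_one' := by rw [← map_one f, hF.apply_map h1, map_one]
            map_mul' := hF.map_mul hS hf hg
            map_zero' := by rw [← map_zero f, hF.apply_map h1, map_zero]
            map_add' := hF.map_add hS hf hg }, hF.apply_map h1⟩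

end Lift

section Compare

variable {R : Type u} [Ring R] {S T : Set R} {P Q : Type u} [Ring P] [Ring Q]
  {f : R →+* P} {g : R →+* Q} {φ : P →+* Q}

theorem IsLeftLoc.injective_iff (hf : IsLeftLoc S f) {B : Type*} [Ring B] {ψ : P →+* B} :
    Function.Injective ψ ↔ ∀ r, ψ (f r) = 0 → f r = 0 := by
  refine ⟨fun h r hr => h (hr.trans (map_zero ψ).symm), fun h => ?_⟩
  refine (injective_iff_map_eq_zero ψ).mpr fun q hq => ?_
  obtain ⟨s, hs, r, hr⟩ := hf.2.1 q
  have hr0 : f r = 0 := h r (by rw [← hr, map_mul, hq, mul_zero])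
  exact (hf.1 s hs).mul_right_eq_zero.mp (hr.trans hr0)

theorem IsLeftLoc.surjective_of_subset (hf : IsLeftLoc S f) (hg : IsLeftLoc T g) (hTS : T ⊆ S)
    (hφ : ∀ r, φ (f r) = g r) : Function.Surjective φ := by
  intro q
  obtain ⟨t, ht, r, hr⟩ := hg.2.1 q
  refine ⟨Ring.inverse (f t) * f r, (hg.1 t ht).mul_left_cancel ?_⟩
  rw [hr, ← hφ, ← map_mul, ← mul_assoc, Ring.mul_inverse_cancel _ (hf.1 t (hTS ht)), one_mul,
    hφ]

theorem IsLeftLoc.bijective (hf : IsLeftLoc S f) (hg : IsLeftLoc S g)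
    (hφ : ∀ r, φ (f r) = g r) : Function.Bijective φ := by
  refine ⟨hf.injective_iff.mpr fun r hr => ?_, hf.surjective_of_subset hg subset_rfl hφ⟩
  rw [hf.2.2, ← hg.2.2, ← hφ, hr]

theorem IsLeftLoc.map_eq_zero_iff (hf : IsLeftLoc S f) (hg : IsLeftLoc T g) (hST : S ⊆ T)
    (hφ : ∀ r, φ (f r) = g r) (q : P) :
    φ q = 0 ↔ ∃ s ∈ S, ∃ b ∈ ass T, f s * q = f b := by
  constructor
  · intro hq
    obtain ⟨s, hs, r, hr⟩ := hf.2.1 q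
    refine ⟨s, hs, r, (hg.2.2 r).mp ?_, hr⟩
    rw [← hφ, ← hr, map_mul, hq, mul_zero]
  · rintro ⟨s, hs, b, hb, hsb⟩
    refine (hg.1 s (hST hs)).mul_right_eq_zero.mp ?_
    rw [← hφ, ← map_mul, hsb, hφ, (hg.2.2 b).mpr hb]

theorem IsLeftLoc.ass_subset_of_injective (hf : IsLeftLoc S f) (hg : IsLeftLoc T g)
    (hφ : ∀ r, φ (f r) = g r) (hinj : Function.Injective φ) : ass T ⊆ ass S := fun b hb =>
  (hf.2.2 b).mp (hf.injective_iff.mp hinj b (by rw [hφ, (hg.2.2 b).mpr hb]))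

end Compare

/-- Here `Sl = S_l(R)`, `Sd = 'S_l(R)`, `Ql = Q_l(R)` and `Qd = 'Q_l(R)`. -/
theorem canonicalHom_largestLeftQuotient_to_leftRegularLeftQuotient {R : Type u} [Ring R]
    (Sl : Set R) (hOre : IsLeftOre Sl) (hSlsub : Sl ⊆ reg R)
    (hSlmax : ∀ T : Set R, IsLeftOre T → T ⊆ reg R → T ⊆ Sl)
    (Sd : Set R) (hd : IsLeftDenom Sd) (hdsub : Sd ⊆ lReg R)
    (hdmax : ∀ T : Set R, IsLeftDenom T → T ⊆ lReg R → T ⊆ Sd)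
    (Ql : Type u) [Ring Ql] (fl : R →+* Ql) (hlocl : IsLeftLoc Sl fl)
    (Qd : Type u) [Ring Qd] (fd : R →+* Qd) (hlocd : IsLeftLoc Sd fd) :
    -- (1)
    (Sl ⊆ Sd ∧ Sd ⊆ lReg R ∧ ass Sl ⊆ ass Sd ∧ ass Sd ⊆ ass (lReg R)) ∧
    -- (2) φ exists, is an R-homomorphism, and ker φ = S_l(R)⁻¹'a
    (∃ φ : Ql →+* Qd,
      (∀ r : R, φ (fl r) = fd r) ∧
      ∀ q : Ql, φ q = 0 ↔ ∃ s ∈ Sl, ∃ b ∈ ass Sd, fl s * q = fl b) ∧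
    -- (3) φ is an isomorphism iff 'a = 0 iff S_l(R) = 'S_l(R)
    (∀ φ : Ql →+* Qd, (∀ r : R, φ (fl r) = fd r) →
      ((Function.Bijective φ ↔ ass Sd = {0}) ∧
       (Function.Bijective φ ↔ Sl = Sd))) ∧
    -- (4) Q_l(R) and 'Q_l(R) are R-isomorphic iff 'a = 0
    ((∃ ψ : Ql ≃+* Qd, ∀ (r : R) (q : Ql), ψ (fl r * q) = fd r * ψ q) ↔
      ass Sd = {0}) := by
  have hSl_lReg : Sl ⊆ lReg R := fun s hs => (hSlsub hs).1
  have hSlSd : Sl ⊆ Sd := hdmax Sl (hOre.isLeftDenom_of_subset_lReg hSl_lReg) hSl_lReg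
  have hassSl : ass Sl = {0} :=
    (ass_eq_singleton_zero_iff hOre.1.1).mpr fun s hs => (hSlsub hs).2
  have hass : ass Sd = {0} ↔ Sl = Sd := by
    refine ⟨fun h => hSlSd.antisymm (hSlmax Sd hd.1 fun s hs => ⟨hdsub hs, ?_⟩), ?_⟩
    · exact (ass_eq_singleton_zero_iff hd.1.1.1).mp h hs
    · rintro rfl
      exact hassSl
  have hbij : ∀ φ : Ql →+* Qd, (∀ r, φ (fl r) = fd r) → (Function.Bijective φ ↔ Sl = Sd) := by
    intro φ hφ
    refine ⟨fun h => hass.mp ?_, ?_⟩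
    · have hsub := hlocl.ass_subset_of_injective hlocd hφ h.1
      rw [hassSl] at hsub
      exact Set.eq_singleton_iff_unique_mem.mpr ⟨⟨1, hd.1.1.1, mul_zero 1⟩, fun _ hb => hsub hb⟩
    · rintro rfl
      exact hlocl.bijective hlocd hφ
  obtain ⟨φ₀, hφ₀⟩ := hlocl.exists_lift hOre fun s hs => hlocd.1 s (hSlSd hs)
  refine ⟨⟨hSlSd, hdsub, ass_mono hSlSd, ass_mono hdsub⟩,
    ⟨φ₀, hφ₀, hlocl.map_eq_zero_iff hlocd hSlSd hφ₀⟩,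
    fun φ hφ => ⟨(hbij φ hφ).trans hass.symm, hbij φ hφ⟩, ⟨?_, fun h => ?_⟩⟩
  · rintro ⟨ψ, hψ⟩
    refine hass.mpr ((hbij ψ.toRingHom fun r => ?_).mp ψ.bijective)
    simpa using hψ r 1
  · refine ⟨RingEquiv.ofBijective φ₀ ((hbij φ₀ hφ₀).mpr (hass.mp h)), fun r q => ?_⟩
    simp [hφ₀]

end Bavula
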